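/- arXiv:0710.0721 — 9 statements merged into one kernel-verified Lean document; each statement's English description precedes it below -/
import Mathlib

section
/- Let u be the 4×2 matrix over A(S⁷_θ) given by u = (z₁, −z₂*, z₃, −z₄*; z₂, z₁*, z₄, z₃*)ᵗ. Then u* u = I₂ (the 2×2 identity), and consequently p = u u* is a self-adjoint idempotent: p² = p = p*. -/
open Complex
open scoped TensorProduct

noncomputable section

/-- The 4×4 deformation matrix of phases η = [[1,1,μ̄,μ],[1,1,μ,μ̄],[μ,μ̄,1,1],[μ̄,μ,1,1]]. -/
def eta (μ : ℂ) : Fin 4 → Fin 4 → ℂ :=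
  ![![1, 1, star μ, μ], ![1, 1, μ, star μ],
    ![μ, star μ, 1, 1], ![star μ, μ, 1, 1]]

/-- The twisting tensor ε: equal to 1 except ε^{1324} = μ and its cyclic permutations,
ε^{1423} = μ̄ and its cyclic permutations (written here with 0-based indices). -/
def eps (μ : ℂ) (i j k l : Fin 4) : ℂ :=
  if (i,j,k,l) = ((0:Fin 4),(2:Fin 4),(1:Fin 4),(3:Fin 4)) ∨ (i,j,k,l) = (2,1,3,0) ∨
     (i,j,k,l) = (1,3,0,2) ∨ (i,j,k,l) = (3,0,2,1) then μ
  else if (i,j,k,l) = ((0:Fin 4),3,1,2) ∨ (i,j,k,l) = (3,1,2,0) ∨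
     (i,j,k,l) = (1,2,0,3) ∨ (i,j,k,l) = (2,0,3,1) then star μ
  else 1

/-- The quantum determinant det(A_θ) = Σ_σ (−1)^{|σ|} ε^σ A_{1σ(1)}A_{2σ(2)}A_{3σ(3)}A_{4σ(4)}. -/
def qdet {R : Type*} [Ring R] [Algebra ℂ R] (μ : ℂ) (A : Fin 4 → Fin 4 → R) : R :=
  ∑ σ : Equiv.Perm (Fin 4),
    (((Equiv.Perm.sign σ : ℤ) : ℂ) * eps μ (σ 0) (σ 1) (σ 2) (σ 3)) •
      (A 0 (σ 0) * A 1 (σ 1) * A 2 (σ 2) * A 3 (σ 3))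

/-- The algebraic complement (quantum cofactor) Â_{il}: a signed sum over the permutations σ
of {1,…,4} with σ(i) = l, of the twisted products of the entries A_{k,σ(k)}, k ≠ i, taken in
increasing order of k, with prefactor ε^{σ₁…l…σ₄} η^{σ₁ l} ⋯ η^{σ_{i−1} l}.  (The sign of the
induced permutation of three letters is (−1)^{i+l} times the sign of σ.) -/
def cof {R : Type*} [Ring R] [Algebra ℂ R] (μ : ℂ) (A : Fin 4 → Fin 4 → R) (i l : Fin 4) : R :=
  ∑ σ : Equiv.Perm (Fin 4),
    if σ i = l then
      (((-1 : ℂ)) ^ ((i : ℕ) + (l : ℕ)) * ((Equiv.Perm.sign σ : ℤ) : ℂ) *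
        eps μ (σ 0) (σ 1) (σ 2) (σ 3) *
        (((List.finRange 4).filter (fun k => decide (k < i))).map
          (fun k => eta μ (σ k) l)).prod) •
      (((List.finRange 4).map (fun k => if k = i then (1 : R) else A k (σ k))).prod)
    else 0

/-- for the defining 4×2 matrix u = (z₁,−z₂*,z₃,−z₄*; z₂,z₁*,z₄,z₃*)ᵗ of
A(S⁷_θ) one has u*u = I₂, and consequently p = uu* is a self-adjoint idempotent. -/
theorem stmt2 {A : Type*} [Ring A] [StarRing A] [Algebra ℂ A]
    (θ : ℝ) (lam : ℂ) (hlam : lam = Complex.exp (2 * Real.pi * Complex.I * θ))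
    (z : Fin 4 → A)
    (hz : ∀ j k, z j * z k = eta lam j k • (z k * z j))
    (hzs : ∀ j k, star (z j) * z k = eta lam k j • (z k * star (z j)))
    (hsphere : ∑ j, star (z j) * z j = 1)
    (u : Fin 4 → Fin 2 → A)
    (hu : u = ![![z 0, z 1], ![-star (z 1), star (z 0)],
                ![z 2, z 3], ![-star (z 3), star (z 2)]])
    (p : Fin 4 → Fin 4 → A)
    (hp : p = fun i j => ∑ a, u i a * star (u j a)) :
    (∀ a b : Fin 2, ∑ i, star (u i a) * u i b = if a = b then 1 else 0) ∧
    (∀ i j : Fin 4, ∑ k, p i k * p k j = p i j) ∧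
    (∀ i j : Fin 4, star (p i j) = p j i) := by
  have hc : ∀ j : Fin 4, z j * star (z j) = star (z j) * z j := by
    intro j
    have h := hzs j j
    have e : eta lam j j = 1 := by fin_cases j <;> rfl
    rw [e, one_smul] at h
    exact h.symm
  have h01 : star (z 0) * z 1 = z 1 * star (z 0) := by
    have h := hzs 0 1; rwa [show eta lam 1 0 = 1 from rfl, one_smul] at h
  have h23 : star (z 2) * z 3 = z 3 * star (z 2) := by
    have h := hzs 2 3; rwa [show eta lam 3 2 = 1 from rfl, one_smul] at h
  have h10 : star (z 1) * z 0 = z 0 * star (z 1) := by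
    have h := hzs 1 0; rwa [show eta lam 0 1 = 1 from rfl, one_smul] at h
  have h32 : star (z 3) * z 2 = z 2 * star (z 3) := by
    have h := hzs 3 2; rwa [show eta lam 2 3 = 1 from rfl, one_smul] at h
  rw [Fin.sum_univ_four] at hsphere
  have key : ∀ a b : Fin 2, ∑ i, star (u i a) * u i b = if a = b then 1 else 0 := by
    intro a b
    fin_cases a <;> fin_cases b <;> simp [hu, Fin.sum_univ_four]
    · rw [hc 1, hc 3]; exact hsphere
    · rw [h01, h23]; abel
    · rw [h10, h32]; abel
    · rw [hc 0, hc 2, ← hsphere]; abel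
  refine ⟨key, ?_, ?_⟩
  · intro i j
    have expand : ∀ k, p i k * p k j
        = ∑ a, ∑ b, u i a * (star (u k a) * (u k b * star (u j b))) := by
      intro k
      rw [hp]
      rw [Finset.sum_mul]
      refine Finset.sum_congr rfl fun a _ => ?_
      rw [Finset.mul_sum]
      refine Finset.sum_congr rfl fun b _ => ?_
      simp only [mul_assoc]
    calc ∑ k, p i k * p k j
        = ∑ k, ∑ a, ∑ b, u i a * (star (u k a) * (u k b * star (u j b))) :=
          Finset.sum_congr rfl fun k _ => expand k
      _ = ∑ a, ∑ b, ∑ k, u i a * (star (u k a) * (u k b * star (u j b))) := by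
          rw [Finset.sum_comm]
          exact Finset.sum_congr rfl fun _ _ => Finset.sum_comm
      _ = ∑ a, ∑ b, u i a * ((∑ k, star (u k a) * u k b) * star (u j b)) := by
          refine Finset.sum_congr rfl fun a _ => Finset.sum_congr rfl fun b _ => ?_
          rw [← Finset.mul_sum, Finset.sum_mul]
          exact congrArg _ (Finset.sum_congr rfl fun k _ => (mul_assoc _ _ _).symm)
      _ = ∑ a, u i a * star (u j a) := by
          simp only [key]
          simp [ite_mul, mul_ite, Finset.sum_ite_eq, Finset.mem_univ]
      _ = p i j := by rw [hp]
  · intro i j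
    rw [hp]
    simp only [star_sum, star_mul, star_star]
end
end

section
/- Let A be a unital algebra generated by elements A_{ij} (i,j = 1,…,4) satisfying A_{ij} A_{kl} = η_{ki} η_{jl} A_{kl} A_{ij} for all i,j,k,l, where η is the symmetric matrix of phases [[1,1,μ̄,μ],[1,1,μ,μ̄],[μ,μ̄,1,1],[μ̄,μ,1,1]] with |μ| = 1. Then for each i and l, the element A_{il} commutes with its algebraic complement Â_{il} = Σ_{σ∈S₃} (−1)^{|σ|} ε^{σ₁…σ_{i−1} l σ_{i+1}…σ₄} η^{σ₁ l} ⋯ η^{σ_{i−1} l} A_{1,σ₁} ⋯ A_{i−1,σ_{i−1}} A_{i+1,σ_{i+1}} ⋯ A_{4,σ₄}, i.e. A_{il} Â_{il} = Â_{il} A_{il}. -/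
open Complex
open scoped TensorProduct

noncomputable section

/-!
Each summand of Â_{il} (where σ(i) = l) is the ordered product over k of A_{k,σ(k)}, with a 1 in
slot i. Moving A_{il} past the k-th factor costs the phase η_{ki} η_{l,σ(k)}; as η has unit
diagonal this also holds for the factor 1. The total phase is thus the product of column i of η
times the product of row l of η permuted by σ, and every row and column of η multiplies to
μ μ̄ = |μ|² = 1.
-/

section QCommute

variable {K R ι : Type*} [Monoid K] [Monoid R] [MulAction K R] [IsScalarTower K R R]
  [SMulCommClass K R R]

theorem mul_prod_map_eq_smul_of_qcomm (a : R) (b : ι → R) (c : ι → K) :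
    ∀ (s : List ι), (∀ k ∈ s, a * b k = c k • (b k * a)) →
      a * (s.map b).prod = (s.map c).prod • ((s.map b).prod * a)
  | [], _ => by simp
  | k :: s, h => by
    have ih := mul_prod_map_eq_smul_of_qcomm a b c s fun j hj => h j (List.mem_cons_of_mem k hj)
    simp only [List.map_cons, List.prod_cons]
    rw [← mul_assoc, h k List.mem_cons_self, smul_mul_assoc, mul_assoc, ih, mul_smul_comm,
      smul_smul, mul_assoc]

end QCommute

theorem eta_self (μ : ℂ) (i : Fin 4) : eta μ i i = 1 := by
  fin_cases i <;> simp [_root_.eta]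

theorem prod_eta_row (μ : ℂ) (i : Fin 4) : ∏ j, eta μ i j = μ * star μ := by
  fin_cases i <;> simp [Fin.prod_univ_four, _root_.eta, mul_comm]

theorem prod_eta_col (μ : ℂ) (j : Fin 4) : ∏ i, eta μ i j = μ * star μ := by
  fin_cases j <;> simp [Fin.prod_univ_four, _root_.eta, mul_comm]

theorem prod_eta_col_mul_eta_row_perm (μ : ℂ) (i l : Fin 4) (σ : Equiv.Perm (Fin 4)) :
    ∏ k, (eta μ k i * eta μ l (σ k)) = (μ * star μ) ^ 2 := by
  rw [Finset.prod_mul_distrib, Equiv.prod_comp σ (eta μ l), prod_eta_col, prod_eta_row, sq]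

theorem commute_cof_summand {R : Type*} [Ring R] [Algebra ℂ R] (μ : ℂ) (hμ : ‖μ‖ = 1)
    (A : Fin 4 → Fin 4 → R)
    (hA : ∀ i j k l, A i j * A k l = (eta μ k i * eta μ j l) • (A k l * A i j))
    (i l : Fin 4) (σ : Equiv.Perm (Fin 4)) (hσ : σ i = l) :
    Commute (A i l)
      ((List.finRange 4).map (fun k => if k = i then (1 : R) else A k (σ k))).prod := by
  have hqcomm : ∀ k ∈ List.finRange 4, A i l * (if k = i then 1 else A k (σ k)) =
      (eta μ k i * eta μ l (σ k)) • ((if k = i then 1 else A k (σ k)) * A i l) := by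
    intro k _
    split_ifs with hk
    · simp [hk, hσ, eta_self]
    · exact hA i l k (σ k)
  have hphase : μ * star μ = 1 := by
    rw [Complex.star_def, Complex.mul_conj', hμ]
    norm_num
  rw [Commute, SemiconjBy, mul_prod_map_eq_smul_of_qcomm _ _ _ _ hqcomm, ← Fin.prod_univ_def,
    prod_eta_col_mul_eta_row_perm, hphase, one_pow, one_smul]

/-- each entry A_{il} commutes with its algebraic complement Â_{il}. -/
theorem stmt4 {R : Type*} [Ring R] [Algebra ℂ R]
    (μ : ℂ) (hμ : ‖μ‖ = 1)
    (A : Fin 4 → Fin 4 → R)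
    (hA : ∀ i j k l, A i j * A k l = (eta μ k i * eta μ j l) • (A k l * A i j)) :
    ∀ i l, A i l * cof μ A i l = cof μ A i l * A i l := by
  intro i l
  refine Commute.sum_right _ _ _ fun σ _ => ?_
  split_ifs with hσ
  · exact (commute_cof_summand μ hμ A hA i l σ hσ).smul_right _
  · exact Commute.zero_right _
end
end

section
/- Let A(M_θ(2,ℍ)) be the algebra generated by A_{ij} (i,j = 1,…,4) with relations A_{ij} A_{kl} = η_{ki} η_{jl} A_{kl} A_{ij}, where η = [[1,1,μ̄,μ],[1,1,μ,μ̄],[μ,μ̄,1,1],[μ̄,μ,1,1]], |μ|=1. Define det(A_θ) = Σ_{σ∈S₄} (−1)^{|σ|} ε^{σ(1)σ(2)σ(3)σ(4)} A_{1,σ(1)} A_{2,σ(2)} A_{3,σ(3)} A_{4,σ(4)}, with ε^{ijkl} = 1 except ε^{1324} = μ and cyclic permutations, ε^{1423} = μ̄ and cyclic permutations. Then for each fixed row i, det(A_θ) = Σ_l (−1)^{i+l} A_{il} Â_{il}, where Â_{il} is the algebraic complement. -/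
/-!
Every term of `qdet` is the product `A 0 (σ 0) * A 1 (σ 1) * A 2 (σ 2) * A 3 (σ 3)`. Moving the
factor `A i (σ i)` to the front past the entries of the rows `k < i` costs the phases
`η_{ik} η_{σ(k)σ(i)}`. Since `|μ| = 1`, the row phases `η_{ik}` (`k < i`) multiply to `1`, and the
remaining phases `η_{σ(k)σ(i)}` are exactly the η-factors of the cofactor `Â_{iσ(i)}`; its sign
`(-1)^(i+σ(i))` cancels against the one in the expansion.
-/

open Complex
open scoped TensorProduct

noncomputable section

namespace List

variable {S R : Type*} [CommMonoid S] [Monoid R] [MulAction S R] [IsScalarTower S R R]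
  [SMulCommClass S R R]

theorem Pairwise.eq_filter_lt_append_cons_filter_gt {α : Type*} [LinearOrder α] {L : List α}
    (hL : L.Pairwise (· < ·)) {i : α} (hi : i ∈ L) :
    L = L.filter (· < i) ++ i :: L.filter (i < ·) := by
  induction L with
  | nil => cases hi
  | cons a t ih =>
    obtain ⟨ha, ht⟩ := pairwise_cons.1 hL
    rcases mem_cons.1 hi with rfl | hit
    · have hlt : t.filter (· < i) = [] :=
        filter_eq_nil_iff.2 fun b hb => by simpa using (ha b hb).le
      have hgt : t.filter (i < ·) = t := filter_eq_self.2 fun b hb => by simpa using ha b hb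
      simp [hlt, hgt]
    · have hai : a < i := ha i hit
      simp [hai, not_lt_of_gt hai, ← ih ht hit]

theorem prod_map_mul_eq_smul {ι : Type*} (L : List ι) (f : ι → R) (c : ι → S) (x : R)
    (h : ∀ k ∈ L, f k * x = c k • (x * f k)) :
    (L.map f).prod * x = (L.map c).prod • (x * (L.map f).prod) := by
  induction L with
  | nil => simp
  | cons a t ih =>
    simp only [map_cons, prod_cons, forall_mem_cons] at h ⊢
    rw [mul_assoc, ih h.2, mul_smul_comm, ← mul_assoc, h.1, smul_mul_assoc, smul_smul, mul_comm,
      mul_assoc]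

theorem Pairwise.prod_map_ite_eq_prod_lt_mul_prod_gt {α : Type*} [LinearOrder α] {L : List α}
    (hL : L.Pairwise (· < ·)) {i : α} (hi : i ∈ L) (x : α → R) :
    (L.map fun k => if k = i then 1 else x k).prod =
      ((L.filter (· < i)).map x).prod * ((L.filter (i < ·)).map x).prod := by
  conv_lhs => rw [hL.eq_filter_lt_append_cons_filter_gt hi]
  have hlt : ∀ k ∈ L.filter (· < i), (if k = i then 1 else x k) = x k := fun k hk =>
    if_neg (of_decide_eq_true (List.mem_filter.1 hk).2).ne
  have hgt : ∀ k ∈ L.filter (i < ·), (if k = i then 1 else x k) = x k := fun k hk =>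
    if_neg (of_decide_eq_true (List.mem_filter.1 hk).2).ne'
  simp only [List.map_append, List.map_cons, if_pos, List.prod_append, List.prod_cons, one_mul,
    List.map_congr_left hlt, List.map_congr_left hgt]

theorem Pairwise.prod_map_eq_smul_mul_prod_map_ite {α : Type*} [LinearOrder α] {L : List α}
    (hL : L.Pairwise (· < ·)) {i : α} (hi : i ∈ L) (x : α → R) (c : α → S)
    (h : ∀ k < i, x k * x i = c k • (x i * x k)) :
    (L.map x).prod =
      ((L.filter (· < i)).map c).prod • (x i * (L.map fun k => if k = i then 1 else x k).prod) := by
  have hc : ∀ k ∈ L.filter (· < i), x k * x i = c k • (x i * x k) := fun k hk =>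
    h k (of_decide_eq_true (List.mem_filter.1 hk).2)
  rw [hL.prod_map_ite_eq_prod_lt_mul_prod_gt hi, ← mul_assoc, ← smul_mul_assoc,
    ← prod_map_mul_eq_smul _ _ _ _ hc, mul_assoc]
  conv_lhs => rw [hL.eq_filter_lt_append_cons_filter_gt hi]
  simp only [List.map_append, List.map_cons, List.prod_append, List.prod_cons]

end List

theorem prod_eta_lt_eq_one {μ : ℂ} (hμ : ‖μ‖ = 1) (i : Fin 4) :
    (((List.finRange 4).filter (· < i)).map (eta μ i)).prod = 1 := by
  fin_cases i <;>
    simp [List.finRange_succ, _root_.eta, Complex.conj_mul', Complex.mul_conj', hμ]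

theorem prod_row_eq_smul_mul_cofactor_term {R : Type*} [Monoid R] [MulAction ℂ R]
    [IsScalarTower ℂ R R] [SMulCommClass ℂ R R] {μ : ℂ}
    (hμ : ‖μ‖ = 1) {A : Fin 4 → Fin 4 → R}
    (hA : ∀ i j k l, A i j * A k l = (eta μ k i * eta μ j l) • (A k l * A i j))
    (σ : Fin 4 → Fin 4) (i : Fin 4) :
    A 0 (σ 0) * A 1 (σ 1) * A 2 (σ 2) * A 3 (σ 3) =
      (((List.finRange 4).filter (· < i)).map fun k => eta μ (σ k) (σ i)).prod •
        (A i (σ i) * ((List.finRange 4).map fun k => if k = i then 1 else A k (σ k)).prod) := by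
  have hsorted := List.sortedLT_iff_pairwise.1 (List.sortedLT_finRange 4)
  have h := hsorted.prod_map_eq_smul_mul_prod_map_ite (List.mem_finRange i)
    (fun k => A k (σ k)) (fun k => eta μ i k * eta μ (σ k) (σ i))
    (fun k _ => hA k (σ k) i (σ i))
  rw [List.prod_map_mul, prod_eta_lt_eq_one hμ, one_mul] at h
  rw [← h]
  simp [List.finRange_succ, mul_assoc]

/-- Laplace expansion of the quantum determinant by any fixed row i:
det(A_θ) = Σ_l (−1)^{i+l} A_{il} Â_{il}. -/
theorem stmt5 {R : Type*} [Ring R] [Algebra ℂ R]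
    (μ : ℂ) (hμ : ‖μ‖ = 1)
    (A : Fin 4 → Fin 4 → R)
    (hA : ∀ i j k l, A i j * A k l = (eta μ k i * eta μ j l) • (A k l * A i j)) :
    ∀ i : Fin 4,
      qdet μ A = ∑ l : Fin 4, ((-1 : ℂ) ^ ((i : ℕ) + (l : ℕ))) • (A i l * cof μ A i l) := by
  intro i
  unfold qdet cof
  simp only [Finset.mul_sum, Finset.smul_sum, mul_ite, mul_zero, smul_ite, smul_zero]
  rw [Finset.sum_comm]
  simp only [Finset.sum_ite_eq, Finset.mem_univ, if_true]
  refine Finset.sum_congr rfl fun σ _ => ?_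
  rw [prod_row_eq_smul_mul_cofactor_term hμ hA σ i, mul_smul_comm, smul_smul, smul_smul]
  congr 1
  rw [← mul_assoc, ← mul_assoc, ← mul_assoc, ← pow_add, Even.neg_one_pow ⟨_, rfl⟩, one_mul]
end
end

section
/- In the algebra generated by A_{ij} (i,j = 1,…,4) with relations A_{ij} A_{kl} = η_{ki} η_{jl} A_{kl} A_{ij} (η the standard deformation matrix of phases with |μ|=1), the quantum determinant det(A_θ) = Σ_{σ∈S₄} (−1)^{|σ|} ε^{σ} A_{1,σ(1)} A_{2,σ(2)} A_{3,σ(3)} A_{4,σ(4)} is a central element of the algebra. -/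
open Complex
open scoped TensorProduct

noncomputable section

/-!
Every monomial `A 0 (σ 0) * A 1 (σ 1) * A 2 (σ 2) * A 3 (σ 3)` of the quantum determinant
already commutes with each generator `A i j`: moving `A i j` through the four factors produces
the scalar `∏ₖ η i k * ∏ₖ η (σ k) j`, a row product times a column product of `η`, and each of
these equals `1` since `μ̄ μ = 1`. The twisting coefficients `ε` play no role. An element
commuting with the generators commutes with the algebra they generate.
-/
section TwistedCommutation

variable {K R : Type*} [CommSemiring K] [Semiring R] [Algebra K R]

theorem List.prod_map_mul_eq_smul_s6 {ι : Type*} (f : ι → R) (c : ι → K) (y : R)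
    (h : ∀ k, f k * y = c k • (y * f k)) (l : List ι) :
    (l.map f).prod * y = (l.map c).prod • (y * (l.map f).prod) := by
  induction l with
  | nil => simp
  | cons k l ih =>
    simp only [List.map_cons, List.prod_cons]
    rw [mul_assoc, ih, mul_smul_comm, ← mul_assoc, h, smul_mul_assoc, smul_smul, mul_assoc,
      mul_comm (c k)]

theorem List.prod_ofFn_mul_eq_smul {n : ℕ} (f : Fin n → R) (c : Fin n → K) (y : R)
    (h : ∀ k, f k * y = c k • (y * f k)) :
    (List.ofFn f).prod * y = (∏ k, c k) • (y * (List.ofFn f).prod) := by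
  have := List.prod_map_mul_eq_smul_s6 f c y h (List.finRange n)
  rwa [← List.ofFn_eq_map, ← List.ofFn_eq_map, List.prod_ofFn] at this

theorem commute_prod_ofFn_perm {n : ℕ} (q : Fin n → Fin n → K) (A : Fin n → Fin n → R)
    (hA : ∀ i j k l, A i j * A k l = (q k i * q j l) • (A k l * A i j))
    (hrow : ∀ i, ∏ k, q i k = 1) (hcol : ∀ j, ∏ k, q k j = 1)
    (σ : Equiv.Perm (Fin n)) (i j : Fin n) :
    Commute (List.ofFn fun k => A k (σ k)).prod (A i j) := by
  have hscalar : ∏ k, q i k * q (σ k) j = 1 := by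
    rw [Finset.prod_mul_distrib, Equiv.prod_comp σ (fun k => q k j), hrow, hcol, one_mul]
  have := List.prod_ofFn_mul_eq_smul _ (fun k => q i k * q (σ k) j) (A i j)
    (fun k => hA k (σ k) i j)
  rwa [hscalar, one_smul] at this

end TwistedCommutation

theorem Complex.conj_mul_self_of_norm_eq_one {μ : ℂ} (hμ : ‖μ‖ = 1) :
    starRingEnd ℂ μ * μ = 1 := by
  rw [conj_mul', hμ]; norm_num

theorem eta_row_prod {μ : ℂ} (hμ : ‖μ‖ = 1) (i : Fin 4) : ∏ k, eta μ i k = 1 := by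
  fin_cases i <;>
    simp [Fin.prod_univ_four, _root_.eta, conj_mul_self_of_norm_eq_one hμ, mul_comm μ]

theorem eta_col_prod {μ : ℂ} (hμ : ‖μ‖ = 1) (j : Fin 4) : ∏ k, eta μ k j = 1 := by
  fin_cases j <;>
    simp [Fin.prod_univ_four, _root_.eta, conj_mul_self_of_norm_eq_one hμ, mul_comm μ]

theorem commute_qdet_entry {R : Type*} [Ring R] [Algebra ℂ R] {μ : ℂ} (hμ : ‖μ‖ = 1)
    (A : Fin 4 → Fin 4 → R)
    (hA : ∀ i j k l, A i j * A k l = (eta μ k i * eta μ j l) • (A k l * A i j)) (i j : Fin 4) :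
    Commute (qdet μ A) (A i j) := by
  refine Commute.sum_left _ _ _ fun σ _ => Commute.smul_left ?_ _
  have := commute_prod_ofFn_perm _ A hA (eta_row_prod hμ) (eta_col_prod hμ) σ i j
  simpa [List.ofFn_succ, mul_assoc] using this

/-- the quantum determinant is central in the algebra generated by the A_{ij}. -/
theorem stmt6 {R : Type*} [Ring R] [Algebra ℂ R]
    (μ : ℂ) (hμ : ‖μ‖ = 1)
    (A : Fin 4 → Fin 4 → R)
    (hA : ∀ i j k l, A i j * A k l = (eta μ k i * eta μ j l) • (A k l * A i j)) :
    ∀ x ∈ Algebra.adjoin ℂ {y : R | ∃ i j, y = A i j},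
      qdet μ A * x = x * qdet μ A := by
  intro x hx
  refine Algebra.commute_of_mem_adjoin_of_forall_mem_commute hx ?_
  rintro _ ⟨i, j, rfl⟩
  exact commute_qdet_entry hμ A hA i j
end
end

section
/- Let I be the two-sided *-ideal of A(SL_θ(2,ℍ)) generated by the elements Σ_k (A_{ki})* A_{kj} − δ_{ij} for i,j = 1,…,4. Then I is a Hopf ideal: Δ(I) ⊆ I ⊗ A + A ⊗ I, ε(I) = 0, and S(I) ⊆ I; hence the quotient A(Sp_θ(2)) = A(SL_θ(2,ℍ))/I is a Hopf *-algebra. -/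
open Complex
open scoped TensorProduct

noncomputable section

/-- The index involution j ↦ j' with j' = j + (−1)^{j+1} (1-based), i.e. 1↔2, 3↔4. -/
def qsw : Fin 4 → Fin 4 := ![1, 0, 3, 2]

/-- The two-sided ideal (as a ℂ-submodule) generated by a set G of elements of a ring. -/
def twoSidedSpan {H : Type*} [Ring H] [Algebra ℂ H] (G : Set H) : Submodule ℂ H :=
  Submodule.span ℂ {x : H | ∃ a b : H, ∃ g ∈ G, x = a * g * b}

/-!
Let `E = Aᴴ * A - 1`, so that the ideal `I` is generated by the entries of `E`; since `E` is
Hermitian, `I` is a *-ideal. Modulo `I`, `Aᴴ` is a left inverse of `A`, while the antipode axiom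
makes `S(A)` a right inverse, so `S(A) ≡ Aᴴ` and `A * Aᴴ ≡ 1`.

The relation `star (A j k) = ± A (qsw j) (qsw k)` makes the entrywise conjugate of `A` again a
corepresentation. This gives `ε(E) = 0` and `Δ(E) = (1 ⊗ Aᴴ)(E ⊗ 1)(1 ⊗ A) + 1 ⊗ E`, and it
turns `S(E i j) ≡ ∑ k, star (A j k) * A i k - δ i j` into `±(A * Aᴴ - 1) (qsw j) (qsw i)`.
-/

open Coalgebra HopfAlgebra
open scoped Matrix

namespace Submodule

variable {R B : Type*} [CommRing R] [Ring B] [Algebra R B]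

def IsTwoSided (p : Submodule R B) : Prop := ∀ x ∈ p, ∀ a b : B, a * x * b ∈ p

variable {p : Submodule R B}

theorem IsTwoSided.mul_sub_mul_mem (hp : p.IsTwoSided) {x x' y y' : B}
    (hx : x - x' ∈ p) (hy : y - y' ∈ p) : x * y - x' * y' ∈ p := by
  have h : x * y - x' * y' = 1 * (x - x') * y + x' * (y - y') * 1 := by noncomm_ring
  rw [h]
  exact add_mem (hp _ hx 1 y) (hp _ hy x' 1)

variable {ι : Type*} [Fintype ι]

theorem IsTwoSided.mul_mul_mem_matrix (hp : p.IsTwoSided) {M : Matrix ι ι B}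
    (hM : M ∈ p.matrix) (L N : Matrix ι ι B) : L * M * N ∈ p.matrix := by
  intro i j
  simp only [Matrix.mul_apply, Finset.sum_mul]
  exact sum_mem fun l _ => sum_mem fun k _ => hp _ (hM k l) _ _

variable [DecidableEq ι] {X A S : Matrix ι ι B}

theorem IsTwoSided.sub_mem_matrix_of_mul_sub_one_mem (hp : p.IsTwoSided)
    (hXA : X * A - 1 ∈ p.matrix) (hAS : A * S = 1) : S - X ∈ p.matrix := by
  have h : S - X = -(1 * (X * A - 1) * S) := by
    rw [one_mul, sub_mul, Matrix.mul_assoc, hAS, Matrix.mul_one, one_mul, neg_sub]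
  rw [h]
  exact neg_mem (hp.mul_mul_mem_matrix hXA 1 S)

theorem IsTwoSided.mul_sub_one_mem_matrix (hp : p.IsTwoSided)
    (hXA : X * A - 1 ∈ p.matrix) (hAS : A * S = 1) : A * X - 1 ∈ p.matrix := by
  have h : A * X - 1 = -(A * (S - X) * 1) := by
    rw [Matrix.mul_one, Matrix.mul_sub, hAS, neg_sub]
  rw [h]
  exact neg_mem (hp.mul_mul_mem_matrix (hp.sub_mem_matrix_of_mul_sub_one_mem hXA hAS) A 1)

end Submodule

section TwoSidedSpan

variable {B : Type*} [Ring B] [Algebra ℂ B] {G : Set B}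

theorem subset_twoSidedSpan : G ⊆ twoSidedSpan G := fun g hg =>
  Submodule.subset_span ⟨1, 1, g, hg, by rw [one_mul, mul_one]⟩

theorem twoSidedSpan_le {p : Submodule ℂ B} (h : ∀ a b, ∀ g ∈ G, a * g * b ∈ p) :
    twoSidedSpan G ≤ p :=
  Submodule.span_le.2 fun _ ⟨a, b, g, hg, hx⟩ => hx ▸ h a b g hg

theorem isTwoSided_twoSidedSpan : (twoSidedSpan G).IsTwoSided := by
  intro x hx a b
  induction hx using Submodule.span_induction with
  | mem x h =>
    obtain ⟨c, d, g, hg, rfl⟩ := h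
    exact Submodule.subset_span ⟨a * c, d * b, g, hg, by simp only [mul_assoc]⟩
  | zero => simp
  | add x y _ _ hx hy => simpa only [mul_add, add_mul] using add_mem hx hy
  | smul c x _ hx => simpa only [mul_smul_comm, smul_mul_assoc] using Submodule.smul_mem _ c hx

end TwoSidedSpan

section TensorSpan

variable {B : Type*} [Ring B] [Algebra ℂ B] (I : Submodule ℂ B)

/-- `I ⊗ B + B ⊗ I`, as a subspace of `B ⊗ B`. -/
def tensorSpan : Submodule ℂ (B ⊗[ℂ] B) :=
  Submodule.span ℂ {t : B ⊗[ℂ] B |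
    (∃ a ∈ I, ∃ b : B, t = a ⊗ₜ[ℂ] b) ∨ (∃ a : B, ∃ b ∈ I, t = a ⊗ₜ[ℂ] b)}

variable {I}

theorem tmul_mem_tensorSpan_of_left {a : B} (ha : a ∈ I) (b : B) : a ⊗ₜ[ℂ] b ∈ tensorSpan I :=
  Submodule.subset_span (Or.inl ⟨a, ha, b, rfl⟩)

theorem tmul_mem_tensorSpan_of_right (a : B) {b : B} (hb : b ∈ I) : a ⊗ₜ[ℂ] b ∈ tensorSpan I :=
  Submodule.subset_span (Or.inr ⟨a, b, hb, rfl⟩)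

theorem Submodule.IsTwoSided.mul_tmul_mul_mem_tensorSpan (hI : I.IsTwoSided) {a b : B}
    (hab : a ∈ I ∨ b ∈ I) (u v : B ⊗[ℂ] B) : u * (a ⊗ₜ[ℂ] b) * v ∈ tensorSpan I := by
  induction u using TensorProduct.induction_on with
  | zero => simp
  | add u u' hu hu' => simpa only [add_mul] using add_mem hu hu'
  | tmul x y =>
    induction v using TensorProduct.induction_on with
    | zero => simp
    | add v v' hv hv' => simpa only [mul_add] using add_mem hv hv'
    | tmul x' y' =>
      rw [Algebra.TensorProduct.tmul_mul_tmul, Algebra.TensorProduct.tmul_mul_tmul]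
      rcases hab with ha | hb
      · exact tmul_mem_tensorSpan_of_left (hI a ha x x') _
      · exact tmul_mem_tensorSpan_of_right _ (hI b hb y y')

theorem Submodule.IsTwoSided.tensorSpan (hI : I.IsTwoSided) : (tensorSpan I).IsTwoSided := by
  intro t ht u v
  induction ht using Submodule.span_induction with
  | mem t h =>
    rcases h with ⟨a, ha, b, rfl⟩ | ⟨a, b, hb, rfl⟩
    · exact hI.mul_tmul_mul_mem_tensorSpan (Or.inl ha) u v
    · exact hI.mul_tmul_mul_mem_tensorSpan (Or.inr hb) u v
  | zero => simp
  | add x y _ _ hx hy => simpa only [mul_add, add_mul] using add_mem hx hy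
  | smul c x _ hx => simpa only [mul_smul_comm, smul_mul_assoc] using Submodule.smul_mem _ c hx

end TensorSpan

section HopfIdeal

variable {H : Type*} [Ring H] {G : Set H}

theorem counit_eq_zero_of_mem_twoSidedSpan [Bialgebra ℂ H]
    (hG : ∀ g ∈ G, counit (R := ℂ) g = 0) {x : H} (hx : x ∈ twoSidedSpan G) :
    counit (R := ℂ) x = 0 := by
  refine twoSidedSpan_le (p := LinearMap.ker (counit (R := ℂ))) (fun a b g hg => ?_) hx
  simp [LinearMap.mem_ker, Bialgebra.counit_mul, hG g hg]

theorem antipode_mem_twoSidedSpan [HopfAlgebra ℂ H]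
    (hG : ∀ g ∈ G, antipode ℂ g ∈ twoSidedSpan G) {x : H} (hx : x ∈ twoSidedSpan G) :
    antipode ℂ x ∈ twoSidedSpan G := by
  refine twoSidedSpan_le (p := (twoSidedSpan G).comap (antipode ℂ)) (fun a b g hg => ?_) hx
  rw [Submodule.mem_comap, antipode_mul_antidistrib, antipode_mul_antidistrib, ← mul_assoc]
  exact isTwoSided_twoSidedSpan _ (hG g hg) _ _

theorem comul_mem_tensorSpan [Bialgebra ℂ H]
    (hG : ∀ g ∈ G, comul (R := ℂ) g ∈ tensorSpan (twoSidedSpan G)) {x : H}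
    (hx : x ∈ twoSidedSpan G) : comul (R := ℂ) x ∈ tensorSpan (twoSidedSpan G) := by
  refine twoSidedSpan_le (p := (tensorSpan (twoSidedSpan G)).comap (comul (R := ℂ)))
    (fun a b g hg => ?_) hx
  rw [Submodule.mem_comap, Bialgebra.comul_mul, Bialgebra.comul_mul]
  exact isTwoSided_twoSidedSpan.tensorSpan _ (hG g hg) _ _

end HopfIdeal

section Corepresentation

variable {R H ι : Type*} [CommRing R] [Ring H] [Fintype ι] [DecidableEq ι] {A : Matrix ι ι H}

theorem Matrix.mul_map_antipode_eq_one [HopfAlgebra R H]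
    (hcomul : ∀ i j, comul (R := R) (A i j) = ∑ k, A i k ⊗ₜ[R] A k j)
    (hcounit : ∀ i j, counit (R := R) (A i j) = if i = j then 1 else 0) :
    A * A.map (antipode R) = 1 := by
  ext i j
  simpa [hcomul, hcounit, Matrix.mul_apply, Matrix.one_apply, apply_ite] using
    mul_antipode_lTensor_comul_apply (R := R) (A i j)

variable [StarRing H]

theorem counit_conjTranspose_mul_sub_one_apply_eq_zero [Bialgebra R H]
    (hcounit : ∀ i j, counit (R := R) (A i j) = if i = j then 1 else 0)
    (hcounit_star : ∀ i j, counit (R := R) (star (A i j)) = if i = j then 1 else 0) (i j : ι) :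
    counit (R := R) ((Aᴴ * A - 1) i j) = 0 := by
  rw [Matrix.sub_apply, map_sub, Matrix.mul_apply, map_sum]
  simp only [Matrix.conjTranspose_apply, Bialgebra.counit_mul, hcounit, hcounit_star,
    Matrix.one_apply]
  by_cases h : i = j
  · subst h
    simp
  · simp [h, Ne.symm h]

open Algebra.TensorProduct in
theorem map_comul_conjTranspose_mul_sub_one [Bialgebra R H]
    (hcomul : ∀ i j, comul (R := R) (A i j) = ∑ k, A i k ⊗ₜ[R] A k j)
    (hcomul_star : ∀ i j, comul (R := R) (star (A i j)) = ∑ k, star (A i k) ⊗ₜ[R] star (A k j)) :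
    (Aᴴ * A - 1).map (Bialgebra.comulAlgHom R H) =
      Aᴴ.map (includeRight : H →ₐ[R] H ⊗[R] H) * (Aᴴ * A - 1).map (includeLeft (S := R)) *
          A.map includeRight + (Aᴴ * A - 1).map includeRight := by
  have hA : A.map (Bialgebra.comulAlgHom R H) =
      A.map (includeLeft (S := R)) * A.map (includeRight : H →ₐ[R] H ⊗[R] H) := by
    ext i j
    simp [Matrix.mul_apply, hcomul]
  have hA' : Aᴴ.map (Bialgebra.comulAlgHom R H) =
      Aᴴ.map (includeRight : H →ₐ[R] H ⊗[R] H) * Aᴴ.map (includeLeft (S := R)) := by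
    ext i j
    simp [Matrix.mul_apply, hcomul_star]
  simp only [← AlgHom.mapMatrix_apply, map_sub, map_mul, map_one] at hA hA' ⊢
  rw [hA, hA']
  noncomm_ring

end Corepresentation

theorem comul_conjTranspose_mul_sub_one_apply_mem {ι H : Type*} [Fintype ι] [DecidableEq ι]
    [Ring H] [StarRing H] [Bialgebra ℂ H] {A : Matrix ι ι H} {I : Submodule ℂ H}
    (hI : I.IsTwoSided) (hE : Aᴴ * A - 1 ∈ I.matrix)
    (hcomul : ∀ i j, comul (R := ℂ) (A i j) = ∑ k, A i k ⊗ₜ[ℂ] A k j)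
    (hcomul_star : ∀ i j, comul (R := ℂ) (star (A i j)) = ∑ k, star (A i k) ⊗ₜ[ℂ] star (A k j))
    (i j : ι) : comul (R := ℂ) ((Aᴴ * A - 1) i j) ∈ tensorSpan I := by
  have h := congrFun (congrFun (map_comul_conjTranspose_mul_sub_one hcomul hcomul_star) i) j
  simp only [Matrix.map_apply, Bialgebra.comulAlgHom_apply, Matrix.add_apply] at h
  rw [h]
  exact add_mem (hI.tensorSpan.mul_mul_mem_matrix
    (fun n m => tmul_mem_tensorSpan_of_left (hE n m) 1) _ _ i j)
    (tmul_mem_tensorSpan_of_right 1 (hE i j))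

section Qsw

theorem qsw_qsw (a : Fin 4) : qsw (qsw a) = a := by
  revert a; decide

theorem qsw_injective : Function.Injective qsw :=
  Function.LeftInverse.injective qsw_qsw

def qswPerm : Equiv.Perm (Fin 4) := Function.Involutive.toPerm qsw qsw_qsw

theorem neg_one_pow_qsw (a : Fin 4) : (-1 : ℂ) ^ (qsw a : ℕ) = -(-1) ^ (a : ℕ) := by
  fin_cases a <;> norm_num [qsw]

theorem neg_one_pow_qsw_add_qsw (a b : Fin 4) :
    (-1 : ℂ) ^ ((qsw a : ℕ) + (qsw b : ℕ)) = (-1) ^ ((a : ℕ) + (b : ℕ)) := by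
  rw [pow_add, pow_add, neg_one_pow_qsw, neg_one_pow_qsw, neg_mul_neg]

theorem neg_one_pow_add_mul_neg_one_pow_add (a k b : ℕ) :
    (-1 : ℂ) ^ (a + k) * (-1) ^ (k + b) = (-1) ^ (a + b) := by
  rw [← pow_add, show a + k + (k + b) = a + b + 2 * k by ring, pow_add, pow_mul, neg_one_sq,
    one_pow, mul_one]

variable {H : Type*} [Ring H] [StarRing H] {A : Matrix (Fin 4) (Fin 4) H}

theorem star_apply_qsw_qsw [Algebra ℂ H]
    (hqstar : ∀ j k, star (A j k) = ((-1 : ℂ) ^ ((j : ℕ) + (k : ℕ))) • A (qsw j) (qsw k))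
    (j k : Fin 4) : star (A (qsw j) (qsw k)) = ((-1 : ℂ) ^ ((j : ℕ) + (k : ℕ))) • A j k := by
  rw [hqstar, qsw_qsw, qsw_qsw, neg_one_pow_qsw_add_qsw]

theorem apply_eq_smul_star_apply_qsw_qsw [Algebra ℂ H]
    (hqstar : ∀ j k, star (A j k) = ((-1 : ℂ) ^ ((j : ℕ) + (k : ℕ))) • A (qsw j) (qsw k))
    (j k : Fin 4) : A j k = ((-1 : ℂ) ^ ((j : ℕ) + (k : ℕ))) • star (A (qsw j) (qsw k)) := by
  rw [star_apply_qsw_qsw hqstar, smul_smul, ← pow_add, Even.neg_one_pow ⟨_, rfl⟩, one_smul]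

theorem counit_star_apply [Bialgebra ℂ H]
    (hqstar : ∀ j k, star (A j k) = ((-1 : ℂ) ^ ((j : ℕ) + (k : ℕ))) • A (qsw j) (qsw k))
    (hcounit : ∀ i j, counit (R := ℂ) (A i j) = if i = j then 1 else 0) (i j : Fin 4) :
    counit (R := ℂ) (star (A i j)) = if i = j then 1 else 0 := by
  rw [hqstar, map_smul, hcounit]
  simp only [qsw_injective.eq_iff]
  split_ifs with h
  · rw [h, smul_eq_mul, mul_one, Even.neg_one_pow ⟨_, rfl⟩]
  · rw [smul_zero]

theorem comul_star_apply [Bialgebra ℂ H]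
    (hqstar : ∀ j k, star (A j k) = ((-1 : ℂ) ^ ((j : ℕ) + (k : ℕ))) • A (qsw j) (qsw k))
    (hcomul : ∀ i j, comul (R := ℂ) (A i j) = ∑ k, A i k ⊗ₜ[ℂ] A k j) (i j : Fin 4) :
    comul (R := ℂ) (star (A i j)) = ∑ k, star (A i k) ⊗ₜ[ℂ] star (A k j) := by
  simp only [hqstar, map_smul, hcomul, TensorProduct.smul_tmul_smul,
    neg_one_pow_add_mul_neg_one_pow_add, ← Finset.smul_sum]
  congr 1
  exact (Equiv.sum_comp qswPerm fun k => A (qsw i) k ⊗ₜ[ℂ] A k (qsw j)).symm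

theorem sum_star_mul_apply_sub_eq [Algebra ℂ H]
    (hqstar : ∀ j k, star (A j k) = ((-1 : ℂ) ^ ((j : ℕ) + (k : ℕ))) • A (qsw j) (qsw k))
    (i j : Fin 4) :
    (∑ k, star (A j k) * A i k) - (if i = j then 1 else 0) =
      ((-1 : ℂ) ^ ((i : ℕ) + (j : ℕ))) • (A * Aᴴ - 1) (qsw j) (qsw i) := by
  rw [Matrix.sub_apply, smul_sub, Matrix.mul_apply, Finset.smul_sum]
  congr 1
  · refine Fintype.sum_equiv qswPerm _ _ fun k => ?_
    rw [hqstar, apply_eq_smul_star_apply_qsw_qsw hqstar i k, smul_mul_smul_comm,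
      add_comm (i : ℕ) k, neg_one_pow_add_mul_neg_one_pow_add, add_comm (j : ℕ)]
    rfl
  · rw [Matrix.one_apply]
    simp only [qsw_injective.eq_iff]
    by_cases h : i = j
    · subst h
      simp [Even.neg_one_pow ⟨_, rfl⟩]
    · simp [h, Ne.symm h]

theorem antipode_star_apply_sub_eq [HopfAlgebra ℂ H]
    (hqstar : ∀ j k, star (A j k) = ((-1 : ℂ) ^ ((j : ℕ) + (k : ℕ))) • A (qsw j) (qsw k))
    (k i : Fin 4) :
    antipode ℂ (star (A k i)) - A i k =
      ((-1 : ℂ) ^ ((k : ℕ) + (i : ℕ))) • (A.map (antipode ℂ) - Aᴴ) (qsw k) (qsw i) := by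
  rw [hqstar, map_smul, apply_eq_smul_star_apply_qsw_qsw hqstar i k, add_comm (i : ℕ),
    Matrix.sub_apply, Matrix.map_apply, Matrix.conjTranspose_apply, smul_sub]

end Qsw

theorem antipode_conjTranspose_mul_sub_one_apply_mem {H : Type*} [Ring H] [StarRing H]
    [HopfAlgebra ℂ H] {A : Matrix (Fin 4) (Fin 4) H} {I : Submodule ℂ H} (hI : I.IsTwoSided)
    (hqstar : ∀ j k, star (A j k) = ((-1 : ℂ) ^ ((j : ℕ) + (k : ℕ))) • A (qsw j) (qsw k))
    (hS : A.map (antipode ℂ) - Aᴴ ∈ I.matrix) (hAA : A * Aᴴ - 1 ∈ I.matrix) (i j : Fin 4) :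
    antipode ℂ ((Aᴴ * A - 1) i j) ∈ I := by
  have h : antipode ℂ ((Aᴴ * A - 1) i j) =
      ∑ k, (antipode ℂ (A k j) * antipode ℂ (star (A k i)) - star (A j k) * A i k) +
        ((∑ k, star (A j k) * A i k) - if i = j then 1 else 0) := by
    rw [Finset.sum_sub_distrib, sub_add_sub_cancel, Matrix.sub_apply, map_sub, Matrix.mul_apply,
      map_sum, Matrix.one_apply]
    simp only [Matrix.conjTranspose_apply, antipode_mul_antidistrib]
    split_ifs <;> simp
  rw [h]
  refine add_mem (sum_mem fun k _ => hI.mul_sub_mul_mem (hS k j) ?_) ?_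
  · rw [antipode_star_apply_sub_eq hqstar]
    exact I.smul_mem _ (hS _ _)
  · rw [sum_star_mul_apply_sub_eq hqstar]
    exact I.smul_mem _ (hAA _ _)

theorem stmt10_general {H : Type*} [Ring H] [StarRing H] [HopfAlgebra ℂ H]
    (A : Fin 4 → Fin 4 → H)
    (hqstar : ∀ j k, star (A j k) = ((-1 : ℂ) ^ ((j : ℕ) + (k : ℕ))) • A (qsw j) (qsw k))
    (hcomul : ∀ i j, Coalgebra.comul (R := ℂ) (A i j) = ∑ k, A i k ⊗ₜ[ℂ] A k j)
    (hcounit : ∀ i j, Coalgebra.counit (R := ℂ) (A i j) = if i = j then (1 : ℂ) else 0)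
    (G : Set H)
    (hG : G = {x : H | ∃ i j : Fin 4,
        x = (∑ k, star (A k i) * A k j) - (if i = j then 1 else 0)}) :
    (∀ x ∈ twoSidedSpan (G ∪ star '' G), Coalgebra.counit (R := ℂ) x = (0 : ℂ)) ∧
    (∀ x ∈ twoSidedSpan (G ∪ star '' G),
        HopfAlgebra.antipode (R := ℂ) x ∈ twoSidedSpan (G ∪ star '' G)) ∧
    (∀ x ∈ twoSidedSpan (G ∪ star '' G),
        Coalgebra.comul (R := ℂ) x ∈ Submodule.span ℂ
          {t : H ⊗[ℂ] H |
            (∃ a ∈ twoSidedSpan (G ∪ star '' G), ∃ b : H, t = a ⊗ₜ[ℂ] b) ∨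
            (∃ a : H, ∃ b ∈ twoSidedSpan (G ∪ star '' G), t = a ⊗ₜ[ℂ] b)}) := by
  set M : Matrix (Fin 4) (Fin 4) H := A
  obtain rfl : G = {x | ∃ i j, x = (Mᴴ * M - 1) i j} := hG
  set G := {x | ∃ i j, x = (Mᴴ * M - 1) i j}
  have hstar : star '' G ⊆ G := by
    rintro _ ⟨_, ⟨i, j, rfl⟩, rfl⟩
    exact ⟨j, i,
      ((Matrix.isHermitian_conjTranspose_mul_self M).sub Matrix.isHermitian_one).apply j i⟩
  rw [Set.union_eq_self_of_subset_right hstar]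
  have hI := isTwoSided_twoSidedSpan (G := G)
  have hE : Mᴴ * M - 1 ∈ (twoSidedSpan G).matrix := fun i j => subset_twoSidedSpan ⟨i, j, rfl⟩
  have hAS := Matrix.mul_map_antipode_eq_one hcomul hcounit
  refine ⟨fun _ => counit_eq_zero_of_mem_twoSidedSpan ?_, fun _ => antipode_mem_twoSidedSpan ?_,
    fun _ => comul_mem_tensorSpan ?_⟩ <;> rintro _ ⟨i, j, rfl⟩
  · exact counit_conjTranspose_mul_sub_one_apply_eq_zero hcounit
      (counit_star_apply hqstar hcounit) i j
  · exact antipode_conjTranspose_mul_sub_one_apply_mem hI hqstar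
      (hI.sub_mem_matrix_of_mul_sub_one_mem hE hAS) (hI.mul_sub_one_mem_matrix hE hAS) i j
  · exact comul_conjTranspose_mul_sub_one_apply_mem hI hE hcomul
      (comul_star_apply hqstar hcomul) i j

/-- the two-sided *-ideal I of A(SL_θ(2,ℍ)) generated by the elements
Σ_k (A_{ki})* A_{kj} − δ_{ij} is a Hopf ideal: ε(I) = 0, S(I) ⊆ I and
Δ(I) ⊆ I ⊗ A + A ⊗ I. -/
theorem stmt10 {H : Type*} [Ring H] [StarRing H] [HopfAlgebra ℂ H]
    (θ : ℝ) (μ : ℂ) (hμ : μ = Complex.exp (Real.pi * Complex.I * θ))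
    (A : Fin 4 → Fin 4 → H)
    (hA : ∀ i j k l, A i j * A k l = (eta μ k i * eta μ j l) • (A k l * A i j))
    (hqstar : ∀ j k, star (A j k) = ((-1 : ℂ) ^ ((j : ℕ) + (k : ℕ))) • A (qsw j) (qsw k))
    (hdet : qdet μ A = 1)
    (hcomul : ∀ i j, Coalgebra.comul (R := ℂ) (A i j) = ∑ k, A i k ⊗ₜ[ℂ] A k j)
    (hcounit : ∀ i j, Coalgebra.counit (R := ℂ) (A i j) = if i = j then (1 : ℂ) else 0)
    (hantipode : ∀ i j, HopfAlgebra.antipode (R := ℂ) (A i j)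
        = ((-1 : ℂ) ^ ((i : ℕ) + (j : ℕ))) • cof μ A j i)
    (G : Set H)
    (hG : G = {x : H | ∃ i j : Fin 4,
        x = (∑ k, star (A k i) * A k j) - (if i = j then 1 else 0)}) :
    (∀ x ∈ twoSidedSpan (G ∪ star '' G), Coalgebra.counit (R := ℂ) x = (0 : ℂ)) ∧
    (∀ x ∈ twoSidedSpan (G ∪ star '' G),
        HopfAlgebra.antipode (R := ℂ) x ∈ twoSidedSpan (G ∪ star '' G)) ∧
    (∀ x ∈ twoSidedSpan (G ∪ star '' G),
        Coalgebra.comul (R := ℂ) x ∈ Submodule.span ℂ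
          {t : H ⊗[ℂ] H |
            (∃ a ∈ twoSidedSpan (G ∪ star '' G), ∃ b : H, t = a ⊗ₜ[ℂ] b) ∨
            (∃ a : H, ∃ b ∈ twoSidedSpan (G ∪ star '' G), t = a ⊗ₜ[ℂ] b)}) :=
  stmt10_general A hqstar hcomul hcounit G hG
end
end

section
/- In the Hopf algebra A(Sp_θ(2)) (the quotient of A(SL_θ(2,ℍ)) by the relations A_θ* A_θ = 1 and det(A_θ) = 1), the relation A_θ A_θ* = 1 also holds, i.e. Σ_k A_{ik}(A_{jk})* = δ_{ij} for all i,j. -/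
open Complex
open scoped TensorProduct

noncomputable section

/-! ### Auxiliary machinery -/

/-- Exponent version of `eta`: `eta μ i j = μ ^ etaE i j`. -/
def etaE : Fin 4 → Fin 4 → ℤ :=
  ![![0,0,-1,1], ![0,0,1,-1], ![1,-1,0,0], ![-1,1,0,0]]

/-- Exponent version of `eps`: `eps μ i j k l = μ ^ epsE i j k l`. -/
def epsE (i j k l : Fin 4) : ℤ :=
  if (i,j,k,l) = ((0:Fin 4),(2:Fin 4),(1:Fin 4),(3:Fin 4)) ∨ (i,j,k,l) = (2,1,3,0) ∨
     (i,j,k,l) = (1,3,0,2) ∨ (i,j,k,l) = (3,0,2,1) then 1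
  else if (i,j,k,l) = ((0:Fin 4),3,1,2) ∨ (i,j,k,l) = (3,1,2,0) ∨
     (i,j,k,l) = (1,2,0,3) ∨ (i,j,k,l) = (2,0,3,1) then -1
  else 0

abbrev Word := List (Fin 4 × Fin 4)

def pkey (p : Fin 4 × Fin 4) : ℕ := p.1.val * 4 + p.2.val

/-- Insert a letter into a word, keeping track of the accumulated η-exponent. -/
def insW (p : Fin 4 × Fin 4) : Word → ℤ × Word
  | [] => (0, [p])
  | q :: l => if pkey p ≤ pkey q then (0, p :: q :: l)
      else ((insW p l).1 + (etaE q.1 p.1 + etaE p.2 q.2), q :: (insW p l).2)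

/-- Insertion sort of a word, keeping track of the accumulated η-exponent. -/
def sortW : Word → ℤ × Word
  | [] => (0, [])
  | p :: l => ((sortW l).1 + (insW p (sortW l).2).1, (insW p (sortW l).2).2)

/-- The product of the generators named by a word. -/
def prodA {R : Type*} [Ring R] (A : Fin 4 → Fin 4 → R) (w : Word) : R :=
  (w.map fun p => A p.1 p.2).prod

def wordF (i j : Fin 4) (σ : Equiv.Perm (Fin 4)) : Word :=
  (i, σ j) :: ((List.finRange 4).filter (fun k => k ≠ j)).map (fun k => (k, σ k))

def expF (j : Fin 4) (σ : Equiv.Perm (Fin 4)) : ℤ :=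
  epsE (σ 0) (σ 1) (σ 2) (σ 3) +
    (((List.finRange 4).filter (fun k => k < j)).map (fun k => etaE (σ k) (σ j))).sum

def keyF (i j : Fin 4) (σ : Equiv.Perm (Fin 4)) : Word × ℤ :=
  ((sortW (wordF i j σ)).2, expF j σ + (sortW (wordF i j σ)).1)

def wordG (σ : Equiv.Perm (Fin 4)) : Word := (List.finRange 4).map (fun k => (k, σ k))

def keyG (σ : Equiv.Perm (Fin 4)) : Word × ℤ :=
  ((sortW (wordG σ)).2, epsE (σ 0) (σ 1) (σ 2) (σ 3) + (sortW (wordG σ)).1)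

def sgn (σ : Equiv.Perm (Fin 4)) : ℤ := (Equiv.Perm.sign σ : ℤ)

/-- The quantum cofactor matrix used for the right-inverse. -/
def DD {R : Type*} [Ring R] [Algebra ℂ R] (μ : ℂ) (A : Fin 4 → Fin 4 → R) (l j : Fin 4) : R :=
  ∑ σ : Equiv.Perm (Fin 4),
    if σ j = l then
      (((Equiv.Perm.sign σ : ℤ) : ℂ) * μ ^ expF j σ) •
        prodA A (((List.finRange 4).filter (fun k => k ≠ j)).map (fun k => (k, σ k)))
    else 0

def keyVal {R : Type*} [Ring R] [Algebra ℂ R] (μ : ℂ) (A : Fin 4 → Fin 4 → R)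
    (key : Word × ℤ) : R := (μ ^ key.2 : ℂ) • prodA A key.1

/-- The combinatorial heart: the Laplace-expansion cancellations, checked by `decide`. -/
def keyOK (i j : Fin 4) : Prop :=
  ∀ key ∈ (Finset.univ.image (keyF i j) ∪ Finset.univ.image keyG),
    (∑ σ ∈ Finset.univ.filter (fun σ => keyF i j σ = key), sgn σ)
      = ∑ σ ∈ Finset.univ.filter (fun σ => keyG σ = key), (if i = j then sgn σ else 0)

instance keyOK.decidable (i j : Fin 4) : Decidable (keyOK i j) := by
  unfold keyOK; infer_instance

set_option maxRecDepth 100000 in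
set_option maxHeartbeats 4000000 in
lemma keyOK_all : ∀ i j : Fin 4, keyOK i j := by decide

section Machinery

variable {H : Type*} [Ring H] [Algebra ℂ H] (μ : ℂ) (A : Fin 4 → Fin 4 → H)

omit [Algebra ℂ H] in
lemma prodA_cons (p : Fin 4 × Fin 4) (l : Word) :
    prodA A (p :: l) = A p.1 p.2 * prodA A l := by
  simp [prodA]

variable (hμ0 : μ ≠ 0)
  (heta : ∀ i j, eta μ i j = μ ^ etaE i j)
  (hA : ∀ i j k l, A i j * A k l = (eta μ k i * eta μ j l) • (A k l * A i j))

include hμ0 heta hA in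
lemma insW_spec : ∀ (l : Word) (p : Fin 4 × Fin 4),
    prodA A (p :: l) = (μ ^ (insW p l).1) • prodA A (insW p l).2 := by
  intro l
  induction l with
  | nil => intro p; simp [insW]
  | cons q l IH =>
    intro p
    by_cases h : pkey p ≤ pkey q
    · simp [insW, h]
    · have step : prodA A (p :: q :: l)
          = (μ ^ (etaE q.1 p.1 + etaE p.2 q.2)) • (A q.1 q.2 * prodA A (p :: l)) := by
        rw [prodA_cons, prodA_cons, ← mul_assoc, hA p.1 p.2 q.1 q.2, smul_mul_assoc,
          mul_assoc, ← prodA_cons, heta, heta, ← zpow_add₀ hμ0]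
      rw [step, IH p, mul_smul_comm, ← prodA_cons, smul_smul, ← zpow_add₀ hμ0]
      simp only [insW, h, if_false]
      ring_nf

include hμ0 heta hA in
lemma sortW_spec : ∀ l : Word,
    prodA A l = (μ ^ (sortW l).1) • prodA A (sortW l).2 := by
  intro l
  induction l with
  | nil => simp [sortW]
  | cons p l IH =>
    rw [prodA_cons, IH, mul_smul_comm, ← prodA_cons, insW_spec μ A hμ0 heta hA,
      smul_smul, ← zpow_add₀ hμ0]
    simp only [sortW]

variable (heps : ∀ i j k l, eps μ i j k l = μ ^ epsE i j k l)

include hμ0 heta hA heps in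
lemma qdet_eq : qdet μ A = ∑ σ : Equiv.Perm (Fin 4), ((sgn σ : ℂ)) • keyVal μ A (keyG σ) := by
  unfold qdet
  refine Finset.sum_congr rfl (fun σ _ => ?_)
  have hw : A 0 (σ 0) * A 1 (σ 1) * A 2 (σ 2) * A 3 (σ 3) = prodA A (wordG σ) := by
    rw [show wordG σ = [(0, σ 0), (1, σ 1), (2, σ 2), (3, σ 3)] from by
      simp [wordG]; rfl]
    simp [prodA, mul_assoc]
  rw [hw, heps, sortW_spec μ A hμ0 heta hA (wordG σ)]
  simp only [keyVal, keyG, sgn, smul_smul]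
  rw [zpow_add₀ hμ0]
  congr 1
  push_cast
  ring

include hμ0 heta hA in
lemma lhs_eq (i j : Fin 4) :
    (∑ l, A i l * DD μ A l j)
      = ∑ σ : Equiv.Perm (Fin 4), ((sgn σ : ℂ)) • keyVal μ A (keyF i j σ) := by
  have collapse : (∑ l, A i l * DD μ A l j)
      = ∑ σ : Equiv.Perm (Fin 4),
          (((Equiv.Perm.sign σ : ℤ) : ℂ) * μ ^ expF j σ) • prodA A (wordF i j σ) := by
    unfold DD
    simp_rw [Finset.mul_sum, mul_ite, mul_zero]
    rw [Finset.sum_comm]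
    refine Finset.sum_congr rfl (fun σ _ => ?_)
    rw [Finset.sum_ite_eq]
    simp only [Finset.mem_univ, if_true]
    rw [mul_smul_comm]
    unfold wordF
    rw [prodA_cons]
  rw [collapse]
  refine Finset.sum_congr rfl (fun σ _ => ?_)
  rw [sortW_spec μ A hμ0 heta hA (wordF i j σ)]
  simp only [keyVal, keyF, sgn, smul_smul]
  rw [zpow_add₀ hμ0]
  congr 1
  push_cast
  ring

lemma fiber_sum {ι κ : Type*} [Fintype ι] [DecidableEq ι] [DecidableEq κ]
    (V : κ → H) (f g : ι → κ) (a b : ι → ℤ)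
    (h : ∀ key ∈ Finset.univ.image f ∪ Finset.univ.image g,
      (∑ σ ∈ Finset.univ.filter (fun σ => f σ = key), a σ)
        = ∑ σ ∈ Finset.univ.filter (fun σ => g σ = key), b σ) :
    (∑ σ, (a σ : ℂ) • V (f σ)) = ∑ σ, (b σ : ℂ) • V (g σ) := by
  classical
  have hf : ∀ σ ∈ (Finset.univ : Finset ι), f σ ∈
      Finset.univ.image f ∪ Finset.univ.image g := fun σ _ =>
    Finset.mem_union_left _ (Finset.mem_image_of_mem f (Finset.mem_univ σ))
  have hg : ∀ σ ∈ (Finset.univ : Finset ι), g σ ∈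
      Finset.univ.image f ∪ Finset.univ.image g := fun σ _ =>
    Finset.mem_union_right _ (Finset.mem_image_of_mem g (Finset.mem_univ σ))
  rw [← Finset.sum_fiberwise_of_maps_to hf (fun σ => (a σ : ℂ) • V (f σ)),
      ← Finset.sum_fiberwise_of_maps_to hg (fun σ => (b σ : ℂ) • V (g σ))]
  refine Finset.sum_congr rfl (fun key hkey => ?_)
  have h1 : (∑ σ ∈ Finset.univ.filter (fun σ => f σ = key), (a σ : ℂ) • V (f σ))
      = ((∑ σ ∈ Finset.univ.filter (fun σ => f σ = key), a σ : ℤ) : ℂ) • V key := by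
    rw [Int.cast_sum, Finset.sum_smul]
    exact Finset.sum_congr rfl fun σ hσ => by rw [(Finset.mem_filter.mp hσ).2]
  have h2 : (∑ σ ∈ Finset.univ.filter (fun σ => g σ = key), (b σ : ℂ) • V (g σ))
      = ((∑ σ ∈ Finset.univ.filter (fun σ => g σ = key), b σ : ℤ) : ℂ) • V key := by
    rw [Int.cast_sum, Finset.sum_smul]
    exact Finset.sum_congr rfl fun σ hσ => by rw [(Finset.mem_filter.mp hσ).2]
  rw [h1, h2, h key hkey]

end Machinery

/-- in A(Sp_θ(2)), where A_θ*A_θ = 1 and det(A_θ) = 1 hold, the relation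
A_θ A_θ* = 1 also holds: Σ_k A_{ik}(A_{jk})* = δ_{ij}. -/
theorem stmt11 {H : Type*} [Ring H] [StarRing H] [Algebra ℂ H]
    (θ : ℝ) (μ : ℂ) (hμ : μ = Complex.exp (Real.pi * Complex.I * θ))
    (A : Fin 4 → Fin 4 → H)
    (hA : ∀ i j k l, A i j * A k l = (eta μ k i * eta μ j l) • (A k l * A i j))
    (hqstar : ∀ j k, star (A j k) = ((-1 : ℂ) ^ ((j : ℕ) + (k : ℕ))) • A (qsw j) (qsw k))
    (hunitary : ∀ i j : Fin 4, ∑ k, star (A k i) * A k j = if i = j then 1 else 0)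
    (hdet : qdet μ A = 1) :
    ∀ i j : Fin 4, ∑ k, A i k * star (A j k) = if i = j then 1 else 0 := by
  have hμ0 : μ ≠ 0 := by rw [hμ]; exact Complex.exp_ne_zero _
  have hstar : star μ = μ⁻¹ := by
    have h1 : star μ = Complex.exp (-(Real.pi * Complex.I * θ)) := by
      rw [hμ]
      rw [show (star (Complex.exp (Real.pi * Complex.I * θ)) : ℂ)
          = (starRingEnd ℂ) (Complex.exp (Real.pi * Complex.I * θ)) from rfl]
      rw [← Complex.exp_conj]
      congr 1
      simp [map_mul, Complex.conj_I, Complex.conj_ofReal]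
      try ring
    rw [h1, hμ, ← Complex.exp_neg]
  have heta : ∀ i j, eta μ i j = μ ^ etaE i j := by
    intro i j
    fin_cases i <;> fin_cases j <;>
      simp [_root_.eta, etaE, hstar, Matrix.vecHead, Matrix.vecTail]
  have heps : ∀ i j k l, eps μ i j k l = μ ^ epsE i j k l := by
    intro i j k l
    unfold eps epsE
    split_ifs <;> simp [hstar]
  -- Laplace expansion: DD is a right inverse up to the determinant
  have laplace : ∀ i j : Fin 4,
      (∑ l, A i l * DD μ A l j) = if i = j then qdet μ A else 0 := by
    intro i j
    rw [lhs_eq μ A hμ0 heta hA i j]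
    by_cases hij : i = j
    · subst hij
      rw [if_pos rfl, qdet_eq μ A hμ0 heta hA heps]
      refine fiber_sum (keyVal μ A) (keyF i i) keyG sgn sgn ?_
      intro key hkey
      have := keyOK_all i i key hkey
      simpa using this
    · rw [if_neg hij]
      have h0 : (0 : H) = ∑ σ : Equiv.Perm (Fin 4), ((0 : ℤ) : ℂ) • keyVal μ A (keyG σ) := by
        simp
      rw [h0]
      refine fiber_sum (keyVal μ A) (keyF i j) keyG sgn (fun _ => 0) ?_
      intro key hkey
      have := keyOK_all i j key hkey
      simpa [hij] using this
  have hD : ∀ i j : Fin 4, (∑ l, A i l * DD μ A l j) = if i = j then (1 : H) else 0 := by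
    intro i j; rw [laplace i j, hdet]
  -- the star-transpose is a left inverse, hence equals DD
  have hBD : ∀ p q : Fin 4, star (A q p) = DD μ A p q := by
    intro p q
    calc star (A q p) = ∑ l, (if l = q then star (A l p) else 0) := by
          rw [Finset.sum_ite_eq']; simp
      _ = ∑ l, star (A l p) * (if l = q then 1 else 0) := by
          refine Finset.sum_congr rfl (fun l _ => ?_); rw [mul_ite, mul_one, mul_zero]
      _ = ∑ l, star (A l p) * (∑ m, A l m * DD μ A m q) := by
          refine Finset.sum_congr rfl (fun l _ => ?_); rw [hD l q]
      _ = ∑ l, ∑ m, (star (A l p) * A l m) * DD μ A m q := by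
          refine Finset.sum_congr rfl (fun l _ => ?_)
          rw [Finset.mul_sum]
          exact Finset.sum_congr rfl (fun m _ => by rw [mul_assoc])
      _ = ∑ m, (∑ l, star (A l p) * A l m) * DD μ A m q := by
          rw [Finset.sum_comm]
          exact Finset.sum_congr rfl (fun m _ => by rw [Finset.sum_mul])
      _ = ∑ m, (if p = m then 1 else 0) * DD μ A m q := by
          refine Finset.sum_congr rfl (fun m _ => ?_); rw [hunitary p m]
      _ = DD μ A p q := by
          rw [show (∑ m, (if p = m then 1 else 0) * DD μ A m q)
              = ∑ m, (if p = m then DD μ A m q else 0) from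
            Finset.sum_congr rfl (fun m _ => by rw [ite_mul, one_mul, zero_mul]),
            Finset.sum_ite_eq]
          simp
  intro i j
  calc (∑ k, A i k * star (A j k)) = ∑ k, A i k * DD μ A k j := by
        refine Finset.sum_congr rfl (fun k _ => ?_); rw [hBD k j]
    _ = if i = j then 1 else 0 := hD i j
end
end

section
/- Let p = u u* ∈ M₄(A(S⁴_θ)) be the basic projection with u*u = I₂, and let P = ũ ρ⁻² ũ* with ũ_{ia} = Σ_j A_{ij} ⊗ u_{ja} and ũ*ũ = ρ² I₂. Define V ∈ M₄(A(SL_θ(2,ℍ)) ⊗ A(S⁷_θ)) by V_{ik} = ρ⁻¹ Σ_a ũ_{ia}(1 ⊗ (u*)_{ak}). Then V*V = 1 ⊗ p and VV* = P, so P is Murray–von Neumann equivalent to 1 ⊗ p. -/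
open Complex
open scoped TensorProduct

noncomputable section

/-- with V_{ik} = ρ⁻¹ Σ_a ũ_{ia}(1 ⊗ (u*)_{ak}) one has V*V = 1 ⊗ p and
VV* = P, so that P is Murray–von Neumann equivalent to 1 ⊗ p.  Here the ambient
*-algebra B plays the role of A(SL_θ(2,ℍ)) ⊗ A(S⁷_θ) (with ρ and ρ⁻¹ adjoined),
v i a represents 1 ⊗ u_{ia} (so that v*v = I₂, coming from u*u = I₂), ut i a
represents ũ_{ia} (so that ũ*ũ = ρ² I₂), and r, rInv represent the central
self-adjoint elements ρ, ρ⁻¹ with r² = ρ². -/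
theorem stmt15 {B : Type*} [Ring B] [StarRing B] [Algebra ℂ B]
    (v ut : Fin 4 → Fin 2 → B) (rho2 r rInv : B)
    (hv : ∀ a b : Fin 2, ∑ i, star (v i a) * v i b = if a = b then 1 else 0)
    (hut : ∀ a b : Fin 2, ∑ i, star (ut i a) * ut i b = if a = b then rho2 else 0)
    (hr2 : r * r = rho2)
    (hrsa : star r = r)
    (hrcentral : ∀ x : B, r * x = x * r)
    (hrinv₁ : r * rInv = 1) (hrinv₂ : rInv * r = 1)
    (V : Fin 4 → Fin 4 → B)
    (hV : V = fun i k => rInv * ∑ a, ut i a * star (v k a))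
    (p P : Fin 4 → Fin 4 → B)
    (hp : p = fun i l => ∑ a, v i a * star (v l a))
    (hP : P = fun i l => rInv * rInv * ∑ a, ut i a * star (ut l a)) :
    (∀ i l : Fin 4, ∑ k, star (V k i) * V k l = p i l) ∧
    (∀ i l : Fin 4, ∑ k, V i k * star (V l k) = P i l) := by

  -- rInv is central
  have hrc : ∀ x : B, rInv * x = x * rInv := by
    intro x
    calc rInv * x = rInv * x * (r * rInv) := by rw [hrinv₁, mul_one]
      _ = rInv * (x * r) * rInv := by simp [mul_assoc]
      _ = rInv * (r * x) * rInv := by rw [hrcentral]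
      _ = (rInv * r) * (x * rInv) := by simp [mul_assoc]
      _ = x * rInv := by rw [hrinv₂, one_mul]
  -- star rInv = rInv
  have hsinv : star rInv = rInv := by
    have h : star rInv * r = 1 := by
      have h0 := congrArg star hrinv₁
      rw [star_mul, hrsa, star_one] at h0
      exact h0
    calc star rInv = star rInv * (r * rInv) := by rw [hrinv₁, mul_one]
      _ = (star rInv * r) * rInv := (mul_assoc _ _ _).symm
      _ = rInv := by rw [h, one_mul]
  -- rho2 is central
  have hrho2c : ∀ x : B, rho2 * x = x * rho2 := by
    intro x
    rw [← hr2]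
    exact Commute.mul_left (hrcentral x) (hrcentral x)
  -- rInv * rInv * rho2 = 1
  have hone : rInv * rInv * rho2 = 1 := by
    rw [← hr2, mul_assoc, ← mul_assoc rInv r r, hrinv₂, one_mul, hrinv₂]
  -- key commutation lemma
  have key1 : ∀ x y : B, (x * rInv) * (rInv * y) = rInv * rInv * (x * y) := by
    intro x y
    calc (x * rInv) * (rInv * y) = (rInv * x) * (rInv * y) := by rw [← hrc]
      _ = rInv * ((x * rInv) * y) := by simp [mul_assoc]
      _ = rInv * ((rInv * x) * y) := by rw [← hrc]
      _ = rInv * rInv * (x * y) := by simp [mul_assoc]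
  have key2 : ∀ x y : B, (rInv * x) * (y * rInv) = rInv * rInv * (x * y) := by
    intro x y
    calc (rInv * x) * (y * rInv) = (rInv * x) * (rInv * y) := by rw [← hrc]
      _ = rInv * ((x * rInv) * y) := by simp [mul_assoc]
      _ = rInv * ((rInv * x) * y) := by rw [← hrc]
      _ = rInv * rInv * (x * y) := by simp [mul_assoc]
  subst hV hp hP
  constructor
  · intro i l
    simp only
    have step1 : ∀ k : Fin 4,
        star (rInv * ∑ a, ut k a * star (v i a)) * (rInv * ∑ a, ut k a * star (v l a))
        = rInv * rInv * ((∑ a, v i a * star (ut k a)) * (∑ a, ut k a * star (v l a))) := by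
      intro k
      rw [star_mul, hsinv]
      rw [show star (∑ a, ut k a * star (v i a)) = ∑ a, v i a * star (ut k a) by
        simp [star_sum, star_mul]]
      exact key1 _ _
    rw [Finset.sum_congr rfl (fun k _ => step1 k), ← Finset.mul_sum]
    have step2 : ∀ k : Fin 4,
        (∑ a, v i a * star (ut k a)) * (∑ a, ut k a * star (v l a))
        = ∑ a : Fin 2, ∑ b : Fin 2,
            v i a * ((star (ut k a) * ut k b) * star (v l b)) := by
      intro k
      rw [Finset.sum_mul_sum]
      refine Finset.sum_congr rfl fun a _ => Finset.sum_congr rfl fun b _ => ?_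
      simp [mul_assoc]
    rw [Finset.sum_congr rfl (fun k _ => step2 k)]
    rw [Finset.sum_comm]
    have step3 : ∀ a : Fin 2,
        (∑ k : Fin 4, ∑ b : Fin 2, v i a * ((star (ut k a) * ut k b) * star (v l b)))
        = rho2 * (v i a * star (v l a)) := by
      intro a
      rw [Finset.sum_comm]
      have : ∀ b : Fin 2,
          (∑ k : Fin 4, v i a * ((star (ut k a) * ut k b) * star (v l b)))
          = v i a * ((if a = b then rho2 else 0) * star (v l b)) := by
        intro b
        rw [← Finset.mul_sum, ← Finset.sum_mul, hut]
      rw [Finset.sum_congr rfl (fun b _ => this b)]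
      simp only [mul_ite, ite_mul, zero_mul, mul_zero, Finset.sum_ite_eq, Finset.mem_univ,
        if_true]
      conv_rhs => rw [hrho2c, mul_assoc, ← hrho2c]
    rw [Finset.sum_congr rfl (fun a _ => step3 a), ← Finset.mul_sum, ← mul_assoc, hone, one_mul]
  · intro i l
    simp only
    have step1 : ∀ k : Fin 4,
        (rInv * ∑ a, ut i a * star (v k a)) * star (rInv * ∑ a, ut l a * star (v k a))
        = rInv * rInv * ((∑ a, ut i a * star (v k a)) * (∑ a, v k a * star (ut l a))) := by
      intro k
      rw [star_mul, hsinv]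
      rw [show star (∑ a, ut l a * star (v k a)) = ∑ a, v k a * star (ut l a) by
        simp [star_sum, star_mul]]
      exact key2 _ _
    rw [Finset.sum_congr rfl (fun k _ => step1 k), ← Finset.mul_sum]
    have step2 : ∀ k : Fin 4,
        (∑ a, ut i a * star (v k a)) * (∑ a, v k a * star (ut l a))
        = ∑ a : Fin 2, ∑ b : Fin 2,
            ut i a * ((star (v k a) * v k b) * star (ut l b)) := by
      intro k
      rw [Finset.sum_mul_sum]
      refine Finset.sum_congr rfl fun a _ => Finset.sum_congr rfl fun b _ => ?_
      simp [mul_assoc]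
    rw [Finset.sum_congr rfl (fun k _ => step2 k)]
    rw [Finset.sum_comm]
    have step3 : ∀ a : Fin 2,
        (∑ k : Fin 4, ∑ b : Fin 2, ut i a * ((star (v k a) * v k b) * star (ut l b)))
        = ut i a * star (ut l a) := by
      intro a
      rw [Finset.sum_comm]
      have : ∀ b : Fin 2,
          (∑ k : Fin 4, ut i a * ((star (v k a) * v k b) * star (ut l b)))
          = ut i a * ((if a = b then 1 else 0) * star (ut l b)) := by
        intro b
        rw [← Finset.mul_sum, ← Finset.sum_mul, hv]
      rw [Finset.sum_congr rfl (fun b _ => this b)]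
      simp only [mul_ite, ite_mul, zero_mul, mul_zero, one_mul, Finset.sum_ite_eq,
        Finset.mem_univ, if_true]
    rw [Finset.sum_congr rfl (fun a _ => step3 a)]
end
end

section
/- Let A_θ = (A_{ij}) satisfy A_{ij}A_{kl} = η_{ki}η_{jl}A_{kl}A_{ij}. Define m_{ij} = Σ_k (A_{ki})* A_{kj} and set m = m₁₁, n = m₃₃, g₁ = m₁₃, g₂ = m₄₁. Then m and n are central in the subalgebra generated by the m_{ij}; g₁ and g₂ are normal (g₁g₁* = g₁*g₁, g₂g₂* = g₂*g₂); and g₁ g₂ = μ² g₂ g₁, g₁ g₂* = μ̄² g₂* g₁. -/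
open Complex
open scoped TensorProduct

noncomputable section

/-! ### Auxiliary lemmas for stmt16 -/

lemma gencomm {R : Type*} [Ring R] [Algebra ℂ R] (X Y Z W : R) (a b d e : ℂ)
    (hYZ : Y*Z = a • (Z*Y)) (hXZ : X*Z = b • (Z*X)) (hYW : Y*W = d • (W*Y))
    (hXW : X*W = e • (W*X)) :
    (X*Y)*(Z*W) = (a*d*b*e) • ((Z*W)*(X*Y)) := by
  calc (X*Y)*(Z*W) = X*((Y*Z)*W) := by rw [mul_assoc, ← mul_assoc Y]
    _ = a • (X*(Z*(Y*W))) := by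
        rw [hYZ]; simp only [smul_mul_assoc, mul_smul_comm, mul_assoc]
    _ = (a*d) • ((X*Z)*(W*Y)) := by
        rw [hYW]; simp only [mul_smul_comm, smul_smul, mul_assoc]
    _ = (a*d*b) • (Z*((X*W)*Y)) := by
        rw [hXZ]
        simp only [smul_mul_assoc, mul_smul_comm, smul_smul, mul_assoc]
    _ = (a*d*b*e) • ((Z*W)*(X*Y)) := by
        rw [hXW]; simp only [smul_mul_assoc, mul_smul_comm, smul_smul, mul_assoc]

section
variable {R : Type*} [Ring R] [StarRing R] [Algebra ℂ R] (μ : ℂ)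
  (A : Fin 4 → Fin 4 → R)
  (hA : ∀ i j k l, A i j * A k l = (eta μ k i * eta μ j l) • (A k l * A i j))
  (hqstar : ∀ j k, star (A j k) = ((-1 : ℂ) ^ ((j : ℕ) + (k : ℕ))) • A (qsw j) (qsw k))

include hA hqstar

lemma comm_AstarA (a b c d : Fin 4) :
    A a b * star (A c d) = (eta μ (qsw c) a * eta μ b (qsw d)) • (star (A c d) * A a b) := by
  rw [hqstar c d, mul_smul_comm, smul_mul_assoc, hA, smul_comm]

lemma comm_starstar (a b c d : Fin 4) :
    star (A a b) * star (A c d) =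
      (eta μ (qsw c) (qsw a) * eta μ (qsw b) (qsw d)) • (star (A c d) * star (A a b)) := by
  rw [hqstar a b, hqstar c d, mul_smul_comm, smul_mul_assoc, hA,
    smul_mul_assoc, mul_smul_comm]
  simp only [smul_smul]
  ring_nf

lemma comm_starA (a b c d : Fin 4) :
    star (A a b) * A c d = (eta μ c (qsw a) * eta μ (qsw b) d) • (A c d * star (A a b)) := by
  rw [hqstar a b, smul_mul_assoc, hA, mul_smul_comm, smul_smul, smul_smul]
  ring_nf

lemma keyterm (p q i j k l : Fin 4) :
    (star (A p i) * A p j) * (star (A q k) * A q l) =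
      ((eta μ (qsw q) p * eta μ j (qsw k)) * (eta μ q p * eta μ j l) *
       (eta μ (qsw q) (qsw p) * eta μ (qsw i) (qsw k)) * (eta μ q (qsw p) * eta μ (qsw i) l)) •
      ((star (A q k) * A q l) * (star (A p i) * A p j)) :=
  gencomm _ _ _ _ _ _ _ _
    (comm_AstarA μ A hA hqstar p j q k)
    (comm_starstar μ A hA hqstar p i q k)
    (hA p j q l)
    (comm_starA μ A hA hqstar p i q l)

end

lemma eta_qsw_qsw (μ : ℂ) (a b : Fin 4) : eta μ (qsw a) (qsw b) = eta μ a b := by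
  fin_cases a <;> fin_cases b <;> simp [_root_.eta, qsw, Matrix.vecHead, Matrix.vecTail]

lemma eta_cancel {μ : ℂ} (hs : star μ = μ⁻¹) (h0 : μ ≠ 0) (a b : Fin 4) :
    eta μ a b * eta μ a (qsw b) = 1 := by
  fin_cases a <;> fin_cases b <;>
    simp [_root_.eta, qsw, Matrix.vecHead, Matrix.vecTail, hs,
      mul_inv_cancel₀ h0, inv_mul_cancel₀ h0]

lemma eta_cancel' {μ : ℂ} (hs : star μ = μ⁻¹) (h0 : μ ≠ 0) (a b : Fin 4) :
    eta μ a b * eta μ (qsw a) b = 1 := by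
  fin_cases a <;> fin_cases b <;>
    simp [_root_.eta, qsw, Matrix.vecHead, Matrix.vecTail, hs,
      mul_inv_cancel₀ h0, inv_mul_cancel₀ h0]

lemma coeff_eq {μ : ℂ} (hs : star μ = μ⁻¹) (h0 : μ ≠ 0) (p q i j k l : Fin 4) :
    (eta μ (qsw q) p * eta μ j (qsw k)) * (eta μ q p * eta μ j l) *
      (eta μ (qsw q) (qsw p) * eta μ (qsw i) (qsw k)) * (eta μ q (qsw p) * eta μ (qsw i) l)
    = eta μ j (qsw k) * eta μ i k * eta μ j l * eta μ (qsw i) l := by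
  have h1 := eta_cancel hs h0 (qsw q) p
  have h2 := eta_cancel hs h0 q p
  have h3 := eta_qsw_qsw μ i k
  calc (eta μ (qsw q) p * eta μ j (qsw k)) * (eta μ q p * eta μ j l) *
      (eta μ (qsw q) (qsw p) * eta μ (qsw i) (qsw k)) * (eta μ q (qsw p) * eta μ (qsw i) l)
      = (eta μ (qsw q) p * eta μ (qsw q) (qsw p)) * (eta μ q p * eta μ q (qsw p)) *
        (eta μ j (qsw k) * eta μ (qsw i) (qsw k) * eta μ j l * eta μ (qsw i) l) := by ring
    _ = eta μ j (qsw k) * eta μ i k * eta μ j l * eta μ (qsw i) l := by rw [h1, h2, h3]; ring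

lemma mswap {R : Type*} [Ring R] [StarRing R] [Algebra ℂ R] {μ : ℂ}
    (hs : star μ = μ⁻¹) (h0 : μ ≠ 0)
    (A : Fin 4 → Fin 4 → R)
    (hA : ∀ i j k l, A i j * A k l = (eta μ k i * eta μ j l) • (A k l * A i j))
    (hqstar : ∀ j k, star (A j k) = ((-1 : ℂ) ^ ((j : ℕ) + (k : ℕ))) • A (qsw j) (qsw k))
    (i j k l : Fin 4) :
    (∑ p, star (A p i) * A p j) * (∑ q, star (A q k) * A q l) =
      (eta μ j (qsw k) * eta μ i k * eta μ j l * eta μ (qsw i) l) •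
        ((∑ q, star (A q k) * A q l) * (∑ p, star (A p i) * A p j)) := by
  rw [Finset.sum_mul_sum, Finset.sum_mul_sum, Finset.sum_comm, Finset.smul_sum]
  refine Finset.sum_congr rfl fun q _ => ?_
  rw [Finset.smul_sum]
  refine Finset.sum_congr rfl fun p _ => ?_
  rw [keyterm μ A hA hqstar p q i j k l, coeff_eq hs h0]

/-- for m_{ij} = Σ_k (A_{ki})* A_{kj}, the elements m = m₁₁ and n = m₃₃ are
central in the subalgebra generated by the m_{ij}; g₁ = m₁₃ and g₂ = m₄₁ are normal;
and g₁g₂ = μ² g₂g₁, g₁g₂* = μ̄² g₂*g₁. -/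
theorem stmt16 {R : Type*} [Ring R] [StarRing R] [Algebra ℂ R]
    (θ : ℝ) (μ : ℂ) (hμ : μ = Complex.exp (Real.pi * Complex.I * θ))
    (A : Fin 4 → Fin 4 → R)
    (hA : ∀ i j k l, A i j * A k l = (eta μ k i * eta μ j l) • (A k l * A i j))
    (hqstar : ∀ j k, star (A j k) = ((-1 : ℂ) ^ ((j : ℕ) + (k : ℕ))) • A (qsw j) (qsw k))
    (m : Fin 4 → Fin 4 → R)
    (hm : m = fun i j => ∑ k, star (A k i) * A k j) :
    (∀ x ∈ Algebra.adjoin ℂ {y : R | ∃ i j, y = m i j},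
        m 0 0 * x = x * m 0 0 ∧ m 2 2 * x = x * m 2 2) ∧
    (m 0 2 * star (m 0 2) = star (m 0 2) * m 0 2) ∧
    (m 3 0 * star (m 3 0) = star (m 3 0) * m 3 0) ∧
    (m 0 2 * m 3 0 = (μ ^ 2) • (m 3 0 * m 0 2)) ∧
    (m 0 2 * star (m 3 0) = (star μ ^ 2) • (star (m 3 0) * m 0 2)) := by
  have h0 : μ ≠ 0 := by rw [hμ]; exact Complex.exp_ne_zero _
  have hs : star μ = μ⁻¹ := by
    rw [hμ, Complex.star_def, ← Complex.exp_conj, ← Complex.exp_neg]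
    congr 1
    simp only [map_mul, Complex.conj_ofReal, Complex.conj_I]
    ring
  have hsw : ∀ i j k l, m i j * m k l =
      (eta μ j (qsw k) * eta μ i k * eta μ j l * eta μ (qsw i) l) • (m k l * m i j) := by
    intro i j k l
    rw [hm]
    exact mswap hs h0 A hA hqstar i j k l
  have hstar : ∀ i j, star (m i j) = m j i := by
    intro i j
    rw [hm]
    simp only [star_sum, star_mul, star_star]
  have hcent : ∀ a k l, m a a * m k l = m k l * m a a := by
    intro a k l
    rw [hsw a a k l]
    have e1 := eta_cancel hs h0 a k
    have e2 := eta_cancel' hs h0 a l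
    have hc : eta μ a (qsw k) * eta μ a k * eta μ a l * eta μ (qsw a) l = 1 := by
      calc eta μ a (qsw k) * eta μ a k * eta μ a l * eta μ (qsw a) l
          = (eta μ a k * eta μ a (qsw k)) * (eta μ a l * eta μ (qsw a) l) := by ring
        _ = 1 := by rw [e1, e2]; ring
    rw [hc, one_smul]
  refine ⟨?_, ?_, ?_, ?_, ?_⟩
  · intro x hx
    induction hx using Algebra.adjoin_induction with
    | mem y hy =>
        obtain ⟨i, j, rfl⟩ := hy
        exact ⟨hcent 0 i j, hcent 2 i j⟩
    | algebraMap r => exact ⟨(Algebra.commutes r _).symm, (Algebra.commutes r _).symm⟩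
    | add x y _ _ hx hy =>
        exact ⟨by rw [mul_add, add_mul, hx.1, hy.1], by rw [mul_add, add_mul, hx.2, hy.2]⟩
    | mul x y _ _ hx hy =>
        constructor
        · rw [← mul_assoc, hx.1, mul_assoc, hy.1, mul_assoc]
        · rw [← mul_assoc, hx.2, mul_assoc, hy.2, mul_assoc]
  · rw [hstar 0 2, hsw 0 2 2 0]
    have hc : eta μ 2 (qsw 2) * eta μ 0 2 * eta μ 2 0 * eta μ (qsw 0) 0 = 1 := by
      simp [_root_.eta, qsw, Matrix.vecHead, Matrix.vecTail, hs,
        mul_inv_cancel₀ h0, inv_mul_cancel₀ h0]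
    rw [hc, one_smul]
  · rw [hstar 3 0, hsw 3 0 0 3]
    have hc : eta μ 0 (qsw 0) * eta μ 3 0 * eta μ 0 3 * eta μ (qsw 3) 3 = 1 := by
      simp [_root_.eta, qsw, Matrix.vecHead, Matrix.vecTail, hs,
        mul_inv_cancel₀ h0, inv_mul_cancel₀ h0]
    rw [hc, one_smul]
  · rw [hsw 0 2 3 0]
    have hc : eta μ 2 (qsw 3) * eta μ 0 3 * eta μ 2 0 * eta μ (qsw 0) 0 = μ ^ 2 := by
      simp [_root_.eta, qsw, Matrix.vecHead, Matrix.vecTail]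
      ring
    rw [hc]
  · rw [hstar 3 0, hsw 0 2 0 3]
    have hc : eta μ 2 (qsw 0) * eta μ 0 0 * eta μ 2 3 * eta μ (qsw 0) 3 = star μ ^ 2 := by
      simp [_root_.eta, qsw, Matrix.vecHead, Matrix.vecTail]
      ring
    rw [hc]
end
end

section
/- Let u be the defining 4×2 matrix of A(S⁷_θ) and define the 2-minors π_{ij} = u_{i1}u_{j2} − u_{i2}u_{j1} for i < j. Then the Plücker-type relation π₁₂ π₃₄ + μ π₁₄ π₂₃ − μ̄ π₁₃ π₂₄ = 0 holds, where μ = e^{πiθ}. -/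
open Complex
open scoped TensorProduct

noncomputable section

/-- the 2-minors π_{ij} = u_{i1}u_{j2} − u_{i2}u_{j1} of the defining 4×2
matrix u of A(S⁷_θ) satisfy the Plücker-type relation
π₁₂π₃₄ + μ π₁₄π₂₃ − μ̄ π₁₃π₂₄ = 0 (no spherical relation needed). -/
theorem stmt18 {A : Type*} [Ring A] [StarRing A] [Algebra ℂ A]
    (θ : ℝ) (μ : ℂ) (hμ : μ = Complex.exp (Real.pi * Complex.I * θ))
    (z : Fin 4 → A) (u : Fin 4 → Fin 2 → A)
    (hu : u = ![![z 0, z 1], ![-star (z 1), star (z 0)],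
                ![z 2, z 3], ![-star (z 3), star (z 2)]])
    (hrel : ∀ (i j : Fin 4) (a b : Fin 2), u i a * u j b = eta μ j i • (u j b * u i a))
    (π : Fin 4 → Fin 4 → A)
    (hπ : π = fun i j => u i 0 * u j 1 - u i 1 * u j 0) :
    π 0 1 * π 2 3 + μ • (π 0 3 * π 1 2) - star μ • (π 0 2 * π 1 3) = 0 := by
  subst hπ
  have hstar : star μ = Complex.exp (-(Real.pi * Complex.I * θ)) := by
    rw [hμ, Complex.star_def, ← Complex.exp_conj]
    congr 1
    rw [map_mul, map_mul, Complex.conj_ofReal, Complex.conj_ofReal, Complex.conj_I]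
    ring
  have hμs : μ * star μ = 1 := by
    rw [hstar, hμ, ← Complex.exp_add, add_neg_cancel, Complex.exp_zero]
  have hsμ : star μ * μ = 1 := by rw [mul_comm] at hμs; exact hμs
  have h31 : ∀ a b : Fin 2, u 3 a * u 1 b = star μ • (u 1 b * u 3 a) := by
    intro a b; simpa [_root_.eta, one_smul] using hrel 3 1 a b
  have h32 : ∀ a b : Fin 2, u 3 a * u 2 b = u 2 b * u 3 a := by
    intro a b; simpa [_root_.eta, one_smul] using hrel 3 2 a b
  have h21 : ∀ a b : Fin 2, u 2 a * u 1 b = μ • (u 1 b * u 2 a) := by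
    intro a b; simpa [_root_.eta, one_smul] using hrel 2 1 a b
  have h31' : ∀ (a b : Fin 2) (x : A),
      u 3 a * (u 1 b * x) = star μ • (u 1 b * (u 3 a * x)) := by
    intro a b x; rw [← mul_assoc, h31, smul_mul_assoc, mul_assoc]
  have h32' : ∀ (a b : Fin 2) (x : A),
      u 3 a * (u 2 b * x) = u 2 b * (u 3 a * x) := by
    intro a b x; rw [← mul_assoc, h32, mul_assoc]
  have h21' : ∀ (a b : Fin 2) (x : A),
      u 2 a * (u 1 b * x) = μ • (u 1 b * (u 2 a * x)) := by
    intro a b x; rw [← mul_assoc, h21, smul_mul_assoc, mul_assoc]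
  simp only [mul_sub, sub_mul, smul_sub, mul_assoc, smul_add, mul_smul_comm,
    h31, h32, h21, h31', h32', h21', smul_smul, hμs, hsμ, one_smul]
  abel
end
end
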